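/- arXiv:1606.04532 — 2 statements merged into one kernel-verified Lean document; each statement's English description precedes it below -/
import Mathlib

section
/- The pair (A, B) ∈ GL_k(F) × GL_{k+1}(F) stabilizes I_{k,k+1} under the simultaneous row/column action (i.e., applying B to the rows and A to the columns of both slices of I_{k,k+1} returns I_{k,k+1}) if and only if there exists c ∈ F^× such that A = c·I_k and B = c⁻¹·I_{k+1}. -/
/-!
With `C = (Aᵀ)⁻¹` the stabilizer condition reads `B * S₀ = S₀ * C` and `B * S₁ = S₁ * C`.
Right multiplication by `S₀` (resp. `S₁`) picks the columns `castSucc j` (resp. `succ j`) of `B`,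
while left multiplication places the rows of `C` in the first (resp. last) `k` rows. Comparing
entries gives `B (i + 1) (j + 1) = C i j = B i j` and zero entries in the last row of `B S₀` and
the first row of `B S₁`, so `B` is constant along its diagonals and zero off the main one:
`B = d • 1`. Then `C = d • 1`, i.e. `A = d⁻¹ • 1`, and `d ≠ 0` because `B` is invertible.
-/

open Matrix

namespace Matrix

variable {R : Type*} {o : Type*} {n : ℕ}

section Submatrix

variable [NonAssocSemiring R] (N : Matrix (Fin n) o R)

@[simp]
theorem one_submatrix_castSucc_mul_apply_castSucc (a : Fin n) (j : o) :
    ((1 : Matrix (Fin (n + 1)) (Fin (n + 1)) R).submatrix id Fin.castSucc * N) a.castSucc j =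
      N a j := by
  simp [mul_apply, one_apply]

@[simp]
theorem one_submatrix_castSucc_mul_apply_last (j : o) :
    ((1 : Matrix (Fin (n + 1)) (Fin (n + 1)) R).submatrix id Fin.castSucc * N) (Fin.last n) j =
      0 := by
  simp [mul_apply, eq_comm (a := Fin.last n)]

@[simp]
theorem one_submatrix_succ_mul_apply_succ (a : Fin n) (j : o) :
    ((1 : Matrix (Fin (n + 1)) (Fin (n + 1)) R).submatrix id Fin.succ * N) a.succ j = N a j := by
  simp [mul_apply, one_apply]

@[simp]
theorem one_submatrix_succ_mul_apply_zero (j : o) :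
    ((1 : Matrix (Fin (n + 1)) (Fin (n + 1)) R).submatrix id Fin.succ * N) 0 j = 0 := by
  simp [mul_apply, eq_comm (a := (0 : Fin (n + 1)))]

theorem mul_one_submatrix_apply {m : Type*} [Fintype m] [DecidableEq m] {l : Type*}
    (B : Matrix o m R) (f : l → m) (i : o) (j : l) :
    (B * (1 : Matrix m m R).submatrix id f) i j = B i (f j) := by
  simp [mul_apply, one_apply]

end Submatrix

section Diagonal

variable {M : Matrix (Fin (n + 1)) (Fin (n + 1)) R}

theorem apply_eq_apply_of_apply_succ_succ
    (hdiag : ∀ a b : Fin n, M a.succ b.succ = M a.castSucc b.castSucc) (t : ℕ) :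
    ∀ i j i' j' : Fin (n + 1), i'.val + t = i → j'.val + t = j → M i j = M i' j' := by
  induction t with
  | zero =>
    intro i j i' j' hi hj
    rw [Fin.ext hi.symm, Fin.ext hj.symm]
  | succ t ih =>
    intro i j i' j' hi hj
    obtain ⟨a, rfl⟩ : ∃ a : Fin n, a.succ = i := ⟨⟨i - 1, by omega⟩, by ext; simp; omega⟩
    obtain ⟨b, rfl⟩ : ∃ b : Fin n, b.succ = j := ⟨⟨j - 1, by omega⟩, by ext; simp; omega⟩
    rw [Fin.val_succ] at hi hj
    rw [hdiag]
    exact ih _ _ _ _ (by simp; omega) (by simp; omega)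

theorem eq_diagonal_of_apply_succ_succ [Zero R]
    (hdiag : ∀ a b : Fin n, M a.succ b.succ = M a.castSucc b.castSucc)
    (hlast : ∀ b : Fin n, M (Fin.last n) b.castSucc = 0)
    (hzero : ∀ b : Fin n, M 0 b.succ = 0) :
    M = diagonal fun _ => M 0 0 := by
  ext i j
  have shift := apply_eq_apply_of_apply_succ_succ hdiag
  rcases lt_trichotomy i j with hij | rfl | hij
  · rw [diagonal_apply_ne _ hij.ne, shift i i j 0 (Fin.succ ⟨j - i - 1, by omega⟩) (by simp)
      (by simp; omega), hzero]
  · rw [diagonal_apply_eq, shift i i i 0 0 (by simp) (by simp)]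
  · rw [diagonal_apply_ne _ hij.ne',
      ← shift (n - i) (Fin.last n) (Fin.castSucc ⟨j + n - i, by omega⟩) i j (by simp; omega)
        (by simp; omega), hlast]

end Diagonal

theorem eq_smul_one_of_mul_one_submatrix_eq [NonAssocSemiring R]
    {B : Matrix (Fin (n + 1)) (Fin (n + 1)) R} {C : Matrix (Fin n) (Fin n) R}
    (h₀ : B * (1 : Matrix (Fin (n + 1)) (Fin (n + 1)) R).submatrix id Fin.castSucc =
      (1 : Matrix (Fin (n + 1)) (Fin (n + 1)) R).submatrix id Fin.castSucc * C)
    (h₁ : B * (1 : Matrix (Fin (n + 1)) (Fin (n + 1)) R).submatrix id Fin.succ =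
      (1 : Matrix (Fin (n + 1)) (Fin (n + 1)) R).submatrix id Fin.succ * C) :
    B = B 0 0 • 1 ∧ C = B 0 0 • 1 := by
  have h₀ i j := congrFun₂ h₀ i j
  have h₁ i j := congrFun₂ h₁ i j
  simp only [mul_one_submatrix_apply] at h₀ h₁
  have hB : B = diagonal fun _ => B 0 0 := by
    refine eq_diagonal_of_apply_succ_succ (fun a b => ?_) (fun b => ?_) (fun b => ?_)
    · rw [h₀, h₁, one_submatrix_castSucc_mul_apply_castSucc, one_submatrix_succ_mul_apply_succ]
    · rw [h₀, one_submatrix_castSucc_mul_apply_last]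
    · rw [h₁, one_submatrix_succ_mul_apply_zero]
  rw [smul_one_eq_diagonal, smul_one_eq_diagonal]
  refine ⟨hB, ?_⟩
  ext a b
  rw [← one_submatrix_castSucc_mul_apply_castSucc C a b, ← h₀, hB]
  simp [diagonal_apply]

end Matrix

/-- `(A, B) ∈ GL_k(F) × GL_{k+1}(F)` stabilizes `I_{k,k+1}` (acting on each slice
`S` by `S ↦ B · S · Aᵀ`) iff there is `c ∈ F^×` with `A = c·I_k` and `B = c⁻¹·I_{k+1}`. -/
theorem stmt2 {F : Type*} [Field F] (k : ℕ) (A : GL (Fin k) F) (B : GL (Fin (k+1)) F) :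
    (let S₀ : Matrix (Fin (k+1)) (Fin k) F :=
        Matrix.of fun i j => if (i : ℕ) = (j : ℕ) then 1 else 0
     let S₁ : Matrix (Fin (k+1)) (Fin k) F :=
        Matrix.of fun i j => if (i : ℕ) = (j : ℕ) + 1 then 1 else 0
     (B : Matrix (Fin (k+1)) (Fin (k+1)) F) * S₀ * (A : Matrix (Fin k) (Fin k) F)ᵀ = S₀ ∧
     (B : Matrix (Fin (k+1)) (Fin (k+1)) F) * S₁ * (A : Matrix (Fin k) (Fin k) F)ᵀ = S₁) ↔
    ∃ c : Fˣ, (A : Matrix (Fin k) (Fin k) F) = (c : F) • (1 : Matrix (Fin k) (Fin k) F) ∧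
      (B : Matrix (Fin (k+1)) (Fin (k+1)) F) =
        ((c⁻¹ : Fˣ) : F) • (1 : Matrix (Fin (k+1)) (Fin (k+1)) F) := by
  have hS₀ : (Matrix.of fun i j => if (i : ℕ) = (j : ℕ) then 1 else 0 :
      Matrix (Fin (k+1)) (Fin k) F) = (1 : Matrix _ _ F).submatrix id Fin.castSucc := by
    ext i j
    simp [one_apply, Fin.ext_iff]
  have hS₁ : (Matrix.of fun i j => if (i : ℕ) = (j : ℕ) + 1 then 1 else 0 :
      Matrix (Fin (k+1)) (Fin k) F) = (1 : Matrix _ _ F).submatrix id Fin.succ := by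
    ext i j
    simp [one_apply, Fin.ext_iff]
  simp only [hS₀, hS₁]
  constructor
  · rintro ⟨h₀, h₁⟩
    set C := ((A⁻¹ : GL (Fin k) F) : Matrix (Fin k) (Fin k) F)ᵀ
    have hAC : (A : Matrix (Fin k) (Fin k) F)ᵀ * C = 1 := by
      rw [← transpose_mul, A.inv_mul, transpose_one]
    have intertwine {S : Matrix (Fin (k+1)) (Fin k) F}
        (h : (B : Matrix (Fin (k+1)) (Fin (k+1)) F) * S * (A : Matrix (Fin k) (Fin k) F)ᵀ = S) :
        (B : Matrix (Fin (k+1)) (Fin (k+1)) F) * S = S * C := by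
      rw [← Matrix.mul_one (_ * S), ← hAC, ← Matrix.mul_assoc, h]
    obtain ⟨hB, hC⟩ := eq_smul_one_of_mul_one_submatrix_eq (intertwine h₀) (intertwine h₁)
    set d := (B : Matrix (Fin (k+1)) (Fin (k+1)) F) 0 0
    have hd : d ≠ 0 := by
      intro hd
      have hBunit := B.isUnit
      rw [hB, hd, zero_smul] at hBunit
      exact not_isUnit_zero hBunit
    refine ⟨(Units.mk0 d hd)⁻¹, ?_, by simpa using hB⟩
    rw [hC, Matrix.mul_smul, mul_one] at hAC
    rw [Units.val_inv_eq_inv_val, Units.val_mk0, eq_inv_smul_iff₀ hd]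
    simpa using congrArg transpose hAC
  · rintro ⟨c, hA, hB⟩
    simp [hA, hB, smul_smul]
end

section
/- The action of GL_k(F) × GL_{k+1}(F) on the set M_k(F) of nondegenerate 2 × k × (k+1) hypermatrices over F (acting by simultaneous row and column operations on both slices) is transitive: every nondegenerate 2 × k × (k+1) hypermatrix lies in the orbit of I_{k,k+1}. -/
/-!
We look for bases `c₀, …, c_{k-1}` of `F^k` and `b₀, …, b_k` of `F^{k+1}` with `S₀ cⱼ = bⱼ` and
`S₁ cⱼ = bⱼ₊₁`, by induction on `k`. Since `S₀` is a `(k+1) × k` matrix there is `φ ≠ 0` with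
`φ S₀ = 0`, and nondegeneracy forces `u := φ S₁ ≠ 0`: otherwise both slices map into
`ker φ = range S₀`, and an eigenvector of `S₀⁻¹ S₁` over `F̄` would lie in the kernel of a
nonzero member of the pencil. Let `P` parametrize `ker u` and choose `Q` with `S₀ Q = S₁ P`;
the smaller pencil `(P, Q)` is again nondegenerate. By induction there are invertible `C`, `B`
with `P C = B I` and `Q C = B J`; the columns of `B` are the new `cⱼ`, and the columns of `S₀ B`
together with the last column of `S₁ B` are the new `bᵢ`.
-/

open Matrix

namespace Matrix

section Slices

/-- `idSlice R k` and `shiftSlice R k` are the two slices of `I_{k,k+1}`. -/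
def idSlice (R : Type*) [Zero R] [One R] (k : ℕ) : Matrix (Fin (k + 1)) (Fin k) R :=
  of fun i j => if (i : ℕ) = (j : ℕ) then 1 else 0

def shiftSlice (R : Type*) [Zero R] [One R] (k : ℕ) : Matrix (Fin (k + 1)) (Fin k) R :=
  of fun i j => if (i : ℕ) = (j : ℕ) + 1 then 1 else 0

variable {R : Type*} [CommSemiring R] {ι : Type*} {n : ℕ}

lemma mul_idSlice (X : Matrix ι (Fin (n + 1)) R) :
    X * idSlice R n = X.submatrix id Fin.castSucc := by
  have : idSlice R n = (1 : Matrix (Fin (n + 1)) (Fin (n + 1)) R).submatrix (Equiv.refl _)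
      Fin.castSucc := by
    ext i j
    simp [idSlice, one_apply, Fin.ext_iff]
  rw [this, mul_submatrix_one]
  rfl

lemma mul_shiftSlice (X : Matrix ι (Fin (n + 1)) R) :
    X * shiftSlice R n = X.submatrix id Fin.succ := by
  have : shiftSlice R n = (1 : Matrix (Fin (n + 1)) (Fin (n + 1)) R).submatrix (Equiv.refl _)
      Fin.succ := by
    ext i j
    simp [shiftSlice, one_apply, Fin.ext_iff]
  rw [this, mul_submatrix_one]
  rfl

def snocCol (X : Matrix ι (Fin n) R) (y : ι → R) : Matrix ι (Fin (n + 1)) R :=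
  of fun r => Fin.snoc (X r) (y r)

lemma snocCol_mulVec_snoc (X : Matrix ι (Fin n) R) (y : ι → R) (c : Fin n → R) (a : R) :
    snocCol X y *ᵥ Fin.snoc c a = X *ᵥ c + a • y := by
  ext r
  simp [snocCol, mulVec, dotProduct, Fin.sum_univ_castSucc, mul_comm]

lemma snocCol_mul_idSlice (X : Matrix ι (Fin (n + 1)) R) (y : ι → R) :
    snocCol X y * idSlice R (n + 1) = X := by
  ext r j
  simp [mul_idSlice, snocCol]

lemma snocCol_mul_shiftSlice (X Y : Matrix ι (Fin (n + 1)) R)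
    (h : Y.submatrix id Fin.castSucc = X.submatrix id Fin.succ) :
    snocCol X (fun r => Y r (Fin.last n)) * shiftSlice R (n + 1) = Y := by
  ext r j
  rw [mul_shiftSlice]
  induction j using Fin.lastCases with
  | last => simp [snocCol]
  | cast j =>
    rw [submatrix_apply, id, Fin.succ_castSucc, snocCol, of_apply, Fin.snoc_castSucc]
    exact (congrFun (congrFun h r) j).symm

end Slices

variable {K : Type*} [Field K] {m n : Type*} [Fintype n]

lemma mulVec_injective_of_rank_eq {M : Matrix m n K} (h : M.rank = Fintype.card n) :
    Function.Injective M.mulVec := by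
  have := M.mulVecLin.finrank_range_add_finrank_ker
  rw [Module.finrank_fintype_fun_eq_card] at this
  have hker : LinearMap.ker M.mulVecLin = ⊥ :=
    Submodule.finrank_eq_zero.mp (by rw [rank] at h; omega)
  exact LinearMap.ker_eq_bot.mp hker

lemma mulVec_injective_of_map {F : Type*} [Field F] (f : F →+* K) {M : Matrix m n F}
    (h : Function.Injective (M.map f).mulVec) : Function.Injective M.mulVec := by
  intro x y hxy
  refine f.injective.comp_left (h ?_)
  ext i
  simp only [← RingHom.map_mulVec, hxy]

lemma exists_mul_eq_one_of_mulVec_injective [Fintype m] [DecidableEq n] {M : Matrix m n K}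
    (h : Function.Injective M.mulVec) : ∃ L : Matrix n m K, L * M = 1 := by
  classical
  obtain ⟨g, hg⟩ := M.mulVecLin.exists_leftInverse_of_injective (LinearMap.ker_eq_bot.mpr h)
  refine ⟨LinearMap.toMatrix' g, ?_⟩
  rw [← LinearMap.toMatrix'_toLin' M, ← LinearMap.toMatrix'_comp]
  exact (congrArg LinearMap.toMatrix' hg).trans LinearMap.toMatrix'_id

lemma map_mulVec_injective [Fintype m] {F : Type*} [Field F] (f : F →+* K) {M : Matrix m n F}
    (h : Function.Injective M.mulVec) : Function.Injective (M.map f).mulVec := by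
  classical
  obtain ⟨L, hL⟩ := exists_mul_eq_one_of_mulVec_injective h
  refine Function.LeftInverse.injective (g := (L.map f).mulVec) fun x => ?_
  rw [mulVec_mulVec, ← Matrix.map_mul, hL, Matrix.map_one f f.map_zero f.map_one, one_mulVec]

lemma exists_ne_zero_vecMul_eq_zero [Fintype m] (M : Matrix m n K)
    (h : Fintype.card n < Fintype.card m) : ∃ φ : m → K, φ ≠ 0 ∧ φ ᵥ* M = 0 := by
  obtain ⟨φ, hφM, hφ⟩ := (Submodule.ne_bot_iff _).mp <|
    LinearMap.ker_ne_bot_of_finrank_lt (f := M.vecMulLinear) (by simpa using h)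
  exact ⟨φ, hφ, hφM⟩

lemma dotProductBilin_ne_zero [Fintype m] {φ : m → K} (hφ : φ ≠ 0) :
    dotProductBilin K K φ ≠ 0 := by
  classical
  refine fun h0 => hφ <| funext fun i => ?_
  simpa using LinearMap.congr_fun h0 (Pi.single i 1)

lemma range_mulVecLin_eq_ker_dotProductBilin [Fintype m] {M : Matrix m n K}
    (hM : Function.Injective M.mulVec) (hcard : Fintype.card m = Fintype.card n + 1)
    {φ : m → K} (hφ : φ ≠ 0) (hφM : φ ᵥ* M = 0) :
    LinearMap.range M.mulVecLin = LinearMap.ker (dotProductBilin K K φ) := by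
  refine Submodule.eq_of_le_of_finrank_le ?_ ?_
  · rintro _ ⟨x, rfl⟩
    simp [dotProduct_mulVec, hφM]
  · have := Module.Dual.finrank_ker_add_one_of_ne_zero (dotProductBilin_ne_zero hφ)
    rw [LinearMap.finrank_range_of_inj hM]
    simp only [Module.finrank_fintype_fun_eq_card] at this ⊢
    omega

lemma range_mulVecLin_le_of_vecMul_eq_zero [Fintype m] {l : Type*} [Fintype l]
    {M : Matrix m n K} (hM : Function.Injective M.mulVec)
    (hcard : Fintype.card m = Fintype.card n + 1) {φ : m → K} (hφ : φ ≠ 0) (hφM : φ ᵥ* M = 0)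
    {N : Matrix m l K} (hφN : φ ᵥ* N = 0) :
    LinearMap.range N.mulVecLin ≤ LinearMap.range M.mulVecLin := by
  rw [range_mulVecLin_eq_ker_dotProductBilin hM hcard hφ hφM]
  rintro _ ⟨x, rfl⟩
  simp [dotProduct_mulVec, hφN]

lemma exists_mul_eq_of_range_le {l : Type*} [Fintype l] [DecidableEq l] {M : Matrix m n K}
    {N : Matrix m l K} (h : LinearMap.range N.mulVecLin ≤ LinearMap.range M.mulVecLin) :
    ∃ Q : Matrix n l K, M * Q = N := by
  choose q hq using fun j => h ⟨Pi.single j 1, rfl⟩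
  refine ⟨(of q)ᵀ, ext_of_mulVec_single fun j => ?_⟩
  rw [← mulVec_mulVec, mulVec_single_one, col_transpose]
  exact hq j

lemma exists_mulVec_injective_vecMul_eq_zero {k : ℕ} {u : Fin (k + 1) → K} (hu : u ≠ 0) :
    ∃ P : Matrix (Fin (k + 1)) (Fin k) K, Function.Injective P.mulVec ∧ u ᵥ* P = 0 := by
  have hdim : Module.finrank K (LinearMap.ker (dotProductBilin K K u)) = k := by
    have := Module.Dual.finrank_ker_add_one_of_ne_zero (dotProductBilin_ne_zero hu)
    rw [Module.finrank_fin_fun] at this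
    omega
  let b := Module.finBasisOfFinrankEq K _ hdim
  let g := (LinearMap.ker (dotProductBilin K K u)).subtype ∘ₗ b.equivFun.symm.toLinearMap
  refine ⟨LinearMap.toMatrix' g, ?_, ?_⟩
  · rw [show (LinearMap.toMatrix' g).mulVec = g from funext (LinearMap.toMatrix'_mulVec g)]
    exact Subtype.val_injective.comp b.equivFun.symm.injective
  · ext j
    rw [Pi.zero_apply, ← dotProduct_single_one (u ᵥ* _), ← dotProduct_mulVec,
      LinearMap.toMatrix'_mulVec]
    exact (b.equivFun.symm (Pi.single j 1)).2

end Matrix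

theorem LinearMap.exists_apply_eq_smul_of_range_le {K V W : Type*} [Field K] [IsAlgClosed K]
    [AddCommGroup V] [Module K V] [FiniteDimensional K V] [Nontrivial V]
    [AddCommGroup W] [Module K W] {s₀ s₁ : V →ₗ[K] W} (h₀ : Function.Injective s₀)
    (h : range s₁ ≤ range s₀) : ∃ (c : K) (x : V), x ≠ 0 ∧ s₁ x = c • s₀ x := by
  let e := LinearEquiv.ofInjective s₀ h₀
  obtain ⟨c, hc⟩ := Module.End.exists_eigenvalue
    (e.symm.toLinearMap ∘ₗ s₁.codRestrict _ fun x => h ⟨x, rfl⟩)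
  obtain ⟨x, hx⟩ := hc.exists_hasEigenvector
  refine ⟨c, x, hx.2, ?_⟩
  simpa [e] using congrArg (fun v => (e v : W)) hx.apply_eq_smul

section Pencil

variable {K : Type*} [Field K] {m n : Type*} [Fintype n]

def IsNondegeneratePencil (T₀ T₁ : Matrix m n K) : Prop :=
  ∀ c₀ c₁ : K, ¬(c₀ = 0 ∧ c₁ = 0) → Function.Injective (c₀ • T₀ + c₁ • T₁).mulVec

namespace IsNondegeneratePencil

variable {T₀ T₁ : Matrix m n K}

lemma mulVec_injective_left (hT : IsNondegeneratePencil T₀ T₁) :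
    Function.Injective T₀.mulVec := by
  simpa using hT 1 0 (by simp)

lemma vecMul_ne_zero [Fintype m] [IsAlgClosed K] [Nonempty n] (hT : IsNondegeneratePencil T₀ T₁)
    (hcard : Fintype.card m = Fintype.card n + 1) {φ : m → K} (hφ : φ ≠ 0)
    (hφT₀ : φ ᵥ* T₀ = 0) : φ ᵥ* T₁ ≠ 0 := by
  intro hφT₁
  obtain ⟨c, x, hx, hcx⟩ := LinearMap.exists_apply_eq_smul_of_range_le hT.mulVec_injective_left
    (range_mulVecLin_le_of_vecMul_eq_zero hT.mulVec_injective_left hcard hφ hφT₀ hφT₁)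
  rw [mulVecLin_apply, mulVecLin_apply] at hcx
  refine hx (hT c (-1) (by simp) ?_)
  rw [mulVec_zero, add_mulVec, smul_mulVec, smul_mulVec, neg_one_smul, hcx, add_neg_cancel]

lemma of_mul_eq {l : Type*} [Fintype l] {P Q : Matrix n l K} (hT : IsNondegeneratePencil T₀ T₁)
    (hP : Function.Injective P.mulVec) (h : T₀ * Q = T₁ * P) : IsNondegeneratePencil P Q := by
  intro c₀ c₁ hc
  have hcomp : T₀.mulVec ∘ (c₀ • P + c₁ • Q).mulVec = (c₀ • T₀ + c₁ • T₁).mulVec ∘ P.mulVec := by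
    ext x : 1
    simp only [Function.comp, mulVec_mulVec]
    rw [Matrix.mul_add, Matrix.add_mul, Matrix.mul_smul, Matrix.mul_smul, Matrix.smul_mul,
      Matrix.smul_mul, h]
  exact Function.Injective.of_comp (hcomp ▸ (hT c₀ c₁ hc).comp hP)

end IsNondegeneratePencil

end Pencil

lemma exists_isUnit_mul_slices_of_reduction {K : Type*} [Field K] {n : ℕ}
    {S₀ S₁ : Matrix (Fin (n + 2)) (Fin (n + 1)) K} {P Q : Matrix (Fin (n + 1)) (Fin n) K}
    {φ : Fin (n + 2) → K} (hS₀ : Function.Injective S₀.mulVec) (hφS₀ : φ ᵥ* S₀ = 0)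
    (hu : φ ᵥ* S₁ ≠ 0) (huP : φ ᵥ* S₁ ᵥ* P = 0) (hPQ : S₀ * Q = S₁ * P)
    {C : Matrix (Fin n) (Fin n) K} {B : Matrix (Fin (n + 1)) (Fin (n + 1)) K} (hB : IsUnit B)
    (hPC : P * C = B * idSlice K n) (hQC : Q * C = B * shiftSlice K n) :
    ∃ B' : Matrix (Fin (n + 2)) (Fin (n + 2)) K, IsUnit B' ∧
      S₀ * B = B' * idSlice K (n + 1) ∧ S₁ * B = B' * shiftSlice K (n + 1) := by
  have hchain : (S₁ * B).submatrix id Fin.castSucc = (S₀ * B).submatrix id Fin.succ := by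
    rw [← mul_idSlice, ← mul_shiftSlice, Matrix.mul_assoc, Matrix.mul_assoc, ← hPC, ← hQC,
      ← Matrix.mul_assoc, ← Matrix.mul_assoc, hPQ]
  -- `φ S₁ B` vanishes on the first `n` coordinates, as `φ S₁ B I = φ S₁ P C = 0`.
  have hlast : (φ ᵥ* S₁ ᵥ* B) (Fin.last n) ≠ 0 := by
    intro h0
    refine hu (vecMul_injective_iff_isUnit.mpr hB ?_)
    ext j
    induction j using Fin.lastCases with
    | last => simpa using h0
    | cast j =>
      have : φ ᵥ* S₁ ᵥ* (B * idSlice K n) = 0 := by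
        rw [← hPC, ← vecMul_vecMul, huP, zero_vecMul]
      rw [mul_idSlice] at this
      show (φ ᵥ* S₁ ᵥ* B) j.castSucc = (0 ᵥ* B) j.castSucc
      rw [zero_vecMul]
      exact congrFun this j
  refine ⟨snocCol (S₀ * B) (fun r => (S₁ * B) r (Fin.last n)), ?_,
    (snocCol_mul_idSlice _ _).symm, (snocCol_mul_shiftSlice _ _ hchain).symm⟩
  rw [← mulVec_injective_iff_isUnit, ← coe_mulVecLin, injective_iff_map_eq_zero]
  intro c hc
  rw [← Fin.snoc_init_self c, mulVecLin_apply, snocCol_mulVec_snoc] at hc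
  have ha : c (Fin.last _) = 0 := by
    have := congrArg (φ ⬝ᵥ ·) hc
    simp only [dotProduct_add, dotProduct_smul, ← mulVec_mulVec, dotProduct_mulVec, hφS₀,
      zero_vecMul, zero_dotProduct, zero_add, dotProduct_zero] at this
    rw [vecMul_vecMul] at hlast
    exact (smul_eq_zero.mp this).resolve_right hlast
  have hinit : Fin.init c = 0 := by
    rw [ha, zero_smul, add_zero, ← mulVec_mulVec] at hc
    exact (mulVec_injective_iff_isUnit.mpr hB) (hS₀ (hc.trans (mulVec_zero _).symm) |>.trans
      (mulVec_zero _).symm)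
  rw [← Fin.snoc_init_self c, hinit, ha]
  ext i
  induction i using Fin.lastCases <;> simp

theorem exists_isUnit_mul_slices {F K : Type*} [Field F] [Field K] [IsAlgClosed K] (f : F →+* K)
    {k : ℕ} (S₀ S₁ : Matrix (Fin (k + 1)) (Fin k) F)
    (hS : IsNondegeneratePencil (S₀.map f) (S₁.map f)) :
    ∃ (C : Matrix (Fin k) (Fin k) F) (B : Matrix (Fin (k + 1)) (Fin (k + 1)) F),
      IsUnit C ∧ IsUnit B ∧ S₀ * C = B * idSlice F k ∧ S₁ * C = B * shiftSlice F k := by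
  induction k with
  | zero => exact ⟨1, 1, isUnit_one, isUnit_one, by ext _ j; exact j.elim0,
      by ext _ j; exact j.elim0⟩
  | succ n ih =>
    have hS₀ : Function.Injective S₀.mulVec := mulVec_injective_of_map f hS.mulVec_injective_left
    obtain ⟨φ, hφ, hφS₀⟩ := exists_ne_zero_vecMul_eq_zero S₀ (by simp)
    have hu : φ ᵥ* S₁ ≠ 0 := by
      intro h
      refine hS.vecMul_ne_zero (by simp) (φ := f ∘ φ) ?_ ?_ ?_
      · exact fun h0 => hφ (f.injective.comp_left (h0.trans (by ext; simp)))
      · ext j; simp [← RingHom.map_vecMul, hφS₀]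
      · ext j; simp [← RingHom.map_vecMul, h]
    obtain ⟨P, hP, huP⟩ := exists_mulVec_injective_vecMul_eq_zero hu
    obtain ⟨Q, hPQ⟩ := exists_mul_eq_of_range_le <|
      range_mulVecLin_le_of_vecMul_eq_zero hS₀ (by simp) hφ hφS₀ (N := S₁ * P)
        (by rw [← vecMul_vecMul, huP])
    obtain ⟨C, B, -, hB, hPC, hQC⟩ := ih P Q <|
      hS.of_mul_eq (map_mulVec_injective f hP) (by rw [← Matrix.map_mul, ← Matrix.map_mul, hPQ])
    obtain ⟨B', hB', h₀, h₁⟩ :=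
      exists_isUnit_mul_slices_of_reduction hS₀ hφS₀ hu huP hPQ hB hPC hQC
    exact ⟨B, B', hB, hB', h₀, h₁⟩

/-- The action of `GL_k(F) × GL_{k+1}(F)` on nondegenerate `2 × k × (k+1)`
hypermatrices, `(A,B)·(S₀,S₁) = (B S₀ Aᵀ, B S₁ Aᵀ)`, is transitive: every nondegenerate
hypermatrix lies in the orbit of `I_{k,k+1}`. -/
theorem stmt3 {F : Type*} [Field F] (k : ℕ)
    (S₀ S₁ : Matrix (Fin (k+1)) (Fin k) F)
    (hnd : ∀ c₀ c₁ : AlgebraicClosure F, ¬ (c₀ = 0 ∧ c₁ = 0) →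
      (c₀ • S₀.map (algebraMap F (AlgebraicClosure F)) +
       c₁ • S₁.map (algebraMap F (AlgebraicClosure F))).rank = k) :
    ∃ (A : GL (Fin k) F) (B : GL (Fin (k+1)) F),
      (B : Matrix (Fin (k+1)) (Fin (k+1)) F) *
        (Matrix.of fun (i : Fin (k+1)) (j : Fin k) => if (i : ℕ) = (j : ℕ) then (1 : F) else 0) *
        (A : Matrix (Fin k) (Fin k) F)ᵀ = S₀ ∧
      (B : Matrix (Fin (k+1)) (Fin (k+1)) F) *
        (Matrix.of fun (i : Fin (k+1)) (j : Fin k) => if (i : ℕ) = (j : ℕ) + 1 then (1 : F) else 0) *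
        (A : Matrix (Fin k) (Fin k) F)ᵀ = S₁ := by
  obtain ⟨C, B, hC, hB, h₀, h₁⟩ := exists_isUnit_mul_slices (algebraMap F (AlgebraicClosure F))
    S₀ S₁ fun c₀ c₁ hc => mulVec_injective_of_rank_eq (by simpa using hnd c₀ c₁ hc)
  have hA : IsUnit C⁻¹ᵀ := (isUnit_transpose _).mpr (isUnit_nonsing_inv_iff.mpr hC)
  have hCdet : IsUnit C.det := (isUnit_iff_isUnit_det C).mp hC
  refine ⟨hA.unit, hB.unit, ?_, ?_⟩
  · rw [IsUnit.unit_spec, IsUnit.unit_spec, transpose_transpose]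
    exact (congrArg (· * C⁻¹) h₀.symm).trans (mul_nonsing_inv_cancel_right _ _ hCdet)
  · rw [IsUnit.unit_spec, IsUnit.unit_spec, transpose_transpose]
    exact (congrArg (· * C⁻¹) h₁.symm).trans (mul_nonsing_inv_cancel_right _ _ hCdet)
end
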